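/- (Diagonalization step in the Mallard's-law construction.) Let U ∈ ℝ^{3×3} be symmetric positive definite with det U = Δ, let R = diag(1, −1, −1) (the 180° rotation about e₁), and suppose Q ∈ SO(3) and a ∈ ℝ³ satisfy Q U R = U + a ⊗ e₁. Set F = U + (1/2) a ⊗ e₁ and C = Fᵀ F. Then: (i) C₁₂ = C₁₃ = 0; (ii) C_{ij} = (U²)_{ij} for all i, j ∈ {2, 3}; (iii) det F = Δ; and (iv) C₁₁ = Δ² / (cof U²)₁₁, where (cof U²)₁₁ = (U²)₂₂(U²)₃₃ − (U²)₂₃(U²)₃₂ > 0. -/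

import Mathlib

/-! With `G = U + a ⊗ e₁ = Q U R`, the matrices `U`, `F`, `G` differ only in their first
column, and that of `F` is the average of the other two. The determinant and the inner products
of the first column with the others are affine in the first column. Since `det G = det U`, and
`Gᵀ G = R U² R` has the entries `(U²)₁ⱼ`, `j ≠ 1`, with flipped sign, the midpoint `F` has
`det F = Δ` and `C₁ⱼ = 0`. The other columns of `F` are those of `U`, so `C` agrees with `U²`
on the lower block, and expanding `det C = Δ²` along the first row gives
`C₁₁ (cof U²)₁₁ = Δ²`; as `C₁₁ ≥ 0`, both factors are positive. -/

open Metric Set MeasureTheory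
open scoped RealInnerProductSpace NNReal Matrix

noncomputable section

/-- `ℝ^d` with the Euclidean structure. -/
abbrev Euc (d : ℕ) := EuclideanSpace ℝ (Fin d)

/-- The Frobenius norm of a matrix. -/
def frobNorm {d : ℕ} (M : Matrix (Fin d) (Fin d) ℝ) : ℝ :=
  Real.sqrt (∑ i, ∑ j, (M i j) ^ 2)

/-- The rank-one matrix `a ⊗ n` with entries `aᵢ nⱼ`. -/
def outer {d : ℕ} (a n : Euc d) : Matrix (Fin d) (Fin d) ℝ :=
  Matrix.of fun i j => a i * n j

/-- The Jacobian matrix of `y` at `x`, with entries `∂yᵢ/∂xⱼ`. -/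
def jacobian {d : ℕ} (y : Euc d → Euc d) (x : Euc d) : Matrix (Fin d) (Fin d) ℝ :=
  Matrix.of fun i j => fderiv ℝ y x (EuclideanSpace.single j 1) i


/-- `F = U + (1/2) a ⊗ e₁`, the midpoint of the Mallard's-law segment. -/
def F10 (U : Matrix (Fin 3) (Fin 3) ℝ) (a : Euc 3) : Matrix (Fin 3) (Fin 3) ℝ :=
  U + (2⁻¹ : ℝ) • outer a (EuclideanSpace.single 0 1)

/-- `C = Fᵀ F`. -/
def C10 (U : Matrix (Fin 3) (Fin 3) ℝ) (a : Euc 3) : Matrix (Fin 3) (Fin 3) ℝ :=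
  (F10 U a)ᵀ * F10 U a

section RankOneColumnUpdate

variable {d : ℕ} (A : Matrix (Fin d) (Fin d) ℝ) (a : Euc d) {k : Fin d}

theorem outer_single_apply (i j : Fin d) :
    outer a (EuclideanSpace.single k 1) i j = if j = k then a i else 0 := by
  simp [outer]

theorem add_smul_outer_single_eq_updateCol (t : ℝ) :
    A + t • outer a (EuclideanSpace.single k 1)
      = A.updateCol k ((fun i => A i k) + t • a.ofLp) := by
  ext i j
  by_cases hj : j = k <;> simp [outer_single_apply, hj]

theorem det_add_smul_outer_single (t : ℝ) :
    (A + t • outer a (EuclideanSpace.single k 1)).det = A.det + t * (A.updateCol k a).det := by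
  rw [add_smul_outer_single_eq_updateCol, Matrix.det_updateCol_add, Matrix.det_updateCol_smul]
  congr
  exact Matrix.updateCol_eq_self A k

theorem gram_add_smul_outer_single_of_ne {i j : Fin d} (hi : i ≠ k) (hj : j ≠ k) (t : ℝ) :
    ((A + t • outer a (EuclideanSpace.single k 1))ᵀ
      * (A + t • outer a (EuclideanSpace.single k 1))) i j
      = (Aᵀ * A) i j := by
  simp [Matrix.mul_apply, outer_single_apply, hi, hj]

theorem gram_add_smul_outer_single_self_of_ne {j : Fin d} (hj : j ≠ k) (t : ℝ) :
    ((A + t • outer a (EuclideanSpace.single k 1))ᵀ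
      * (A + t • outer a (EuclideanSpace.single k 1))) k j
      = (Aᵀ * A) k j + t * ∑ i, a i * A i j := by
  simp [Matrix.mul_apply, outer_single_apply, hj, add_mul, Finset.sum_add_distrib, Finset.mul_sum,
    mul_assoc]

theorem det_add_half_outer_single
    (h : (A + outer a (EuclideanSpace.single k 1)).det = A.det) :
    (A + (2⁻¹ : ℝ) • outer a (EuclideanSpace.single k 1)).det = A.det := by
  have h₁ := det_add_smul_outer_single A a 1 (k := k)
  rw [one_smul, h] at h₁
  rw [det_add_smul_outer_single]
  linarith

theorem gram_add_half_outer_single_self_of_ne {j : Fin d} (hj : j ≠ k)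
    (h : ((A + outer a (EuclideanSpace.single k 1))ᵀ
      * (A + outer a (EuclideanSpace.single k 1))) k j = -(Aᵀ * A) k j) :
    ((A + (2⁻¹ : ℝ) • outer a (EuclideanSpace.single k 1))ᵀ
      * (A + (2⁻¹ : ℝ) • outer a (EuclideanSpace.single k 1))) k j = 0 := by
  have h₁ := gram_add_smul_outer_single_self_of_ne A a hj 1
  rw [one_smul, h] at h₁
  rw [gram_add_smul_outer_single_self_of_ne A a hj]
  linarith

end RankOneColumnUpdate

theorem Matrix.transpose_mul_self_eq_of_mul_mul_eq {n R : Type*} [Fintype n] [DecidableEq n]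
    [CommRing R] {Q A B M : Matrix n n R} (hQ : Qᵀ * Q = 1) (h : Q * A * B = M) :
    Mᵀ * M = Bᵀ * (Aᵀ * A) * B := by
  rw [← h, Matrix.transpose_mul, Matrix.transpose_mul]
  simp only [Matrix.mul_assoc]
  rw [← Matrix.mul_assoc Qᵀ Q, hQ, Matrix.one_mul]

theorem Matrix.det_fin_three_of_apply_zero_one_of_apply_zero_two {R : Type*} [CommRing R]
    {M : Matrix (Fin 3) (Fin 3) R} (h₁ : M 0 1 = 0) (h₂ : M 0 2 = 0) :
    M.det = M 0 0 * (M 1 1 * M 2 2 - M 1 2 * M 2 1) := by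
  rw [Matrix.det_fin_three, h₁, h₂]
  ring

/-- diagonalization step in the Mallard's-law construction. Let `U` be
symmetric positive definite with `det U = Δ`, let `R = diag(1,-1,-1)`, and suppose
`Q ∈ SO(3)` and `a ∈ ℝ³` satisfy `Q U R = U + a ⊗ e₁`. With `F = U + (1/2) a ⊗ e₁` and
`C = Fᵀ F`: (i) `C₁₂ = C₁₃ = 0`; (ii) `C_{ij} = (U²)_{ij}` for `i, j ∈ {2,3}`;
(iii) `det F = Δ`; and (iv) `C₁₁ = Δ²/(cof U²)₁₁` with `(cof U²)₁₁ > 0`. -/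
theorem statement10 (Δ : ℝ) (U : Matrix (Fin 3) (Fin 3) ℝ)
    (hU : U.PosDef) (hdet : U.det = Δ)
    (Q : Matrix (Fin 3) (Fin 3) ℝ) (hQ : Qᵀ * Q = 1) (hQdet : Q.det = 1)
    (a : Euc 3)
    (hmallard : Q * U * Matrix.diagonal ![1, -1, -1]
      = U + outer a (EuclideanSpace.single 0 1)) :
    C10 U a 0 1 = 0 ∧ C10 U a 0 2 = 0 ∧
    (∀ i j : Fin 3, i ≠ 0 → j ≠ 0 → C10 U a i j = (U * U) i j) ∧
    (F10 U a).det = Δ ∧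
    0 < (U * U) 1 1 * (U * U) 2 2 - (U * U) 1 2 * (U * U) 2 1 ∧
    C10 U a 0 0 = Δ ^ 2 / ((U * U) 1 1 * (U * U) 2 2 - (U * U) 1 2 * (U * U) 2 1) := by
  have hUU : Uᵀ * U = U * U := by
    rw [← Matrix.conjTranspose_eq_transpose_of_trivial, hU.1.eq]
  have hflip : ∀ j : Fin 3, j ≠ 0 →
      ((U + outer a (EuclideanSpace.single 0 1))ᵀ * (U + outer a (EuclideanSpace.single 0 1))) 0 j
        = -(Uᵀ * U) 0 j := by
    intro j hj
    rw [Matrix.transpose_mul_self_eq_of_mul_mul_eq hQ hmallard, Matrix.diagonal_transpose,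
      Matrix.mul_diagonal, Matrix.diagonal_mul]
    fin_cases j <;> simp at hj ⊢
  have hdetF : (F10 U a).det = Δ := by
    refine hdet ▸ det_add_half_outer_single U a ?_
    rw [← hmallard, Matrix.det_mul, Matrix.det_mul, hQdet, Matrix.det_diagonal]
    simp [Fin.prod_univ_three]
  have hoff : ∀ j : Fin 3, j ≠ 0 → C10 U a 0 j = 0 := fun j hj =>
    gram_add_half_outer_single_self_of_ne U a hj (hflip j hj)
  have hblock : ∀ i j : Fin 3, i ≠ 0 → j ≠ 0 → C10 U a i j = (U * U) i j :=
    fun i j hi hj => hUU ▸ gram_add_smul_outer_single_of_ne U a hi hj _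
  have hdetC : C10 U a 0 0 * ((U * U) 1 1 * (U * U) 2 2 - (U * U) 1 2 * (U * U) 2 1) = Δ ^ 2 := by
    rw [← hblock 1 1 (by decide) (by decide), ← hblock 2 2 (by decide) (by decide),
      ← hblock 1 2 (by decide) (by decide), ← hblock 2 1 (by decide) (by decide),
      ← Matrix.det_fin_three_of_apply_zero_one_of_apply_zero_two (hoff 1 (by decide))
        (hoff 2 (by decide)),
      C10, Matrix.det_mul, Matrix.det_transpose, hdetF, sq]
  have hC00 : 0 ≤ C10 U a 0 0 := (Matrix.posSemidef_conjTranspose_mul_self (F10 U a)).diag_nonneg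
  have hcof := pos_of_mul_pos_right (hdetC ▸ pow_pos (hdet ▸ hU.det_pos) 2) hC00
  exact ⟨hoff 1 (by decide), hoff 2 (by decide), hblock, hdetF, hcof,
    eq_div_of_mul_eq hcof.ne' hdetC⟩

end
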